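/- arXiv:1910.05840 — 4 statements merged into one kernel-verified Lean document; each statement's English description precedes it below -/
import Mathlib

section
/- Let X and Y be independent real-valued random variables with finite fourth moments. Write μ_{r,X} = E[(X − E X)^r], μ_{r,Y} = E[(Y − E Y)^r] for r = 2,3,4, and d = E X − E Y. Then Var((X − Y)²/2) = ¼ { μ_{4,X} + μ_{4,Y} + 2 μ_{2,X} μ_{2,Y} + 4 d² (μ_{2,X} + μ_{2,Y}) − (μ_{2,X} − μ_{2,Y})² + 4 d (μ_{3,X} − μ_{3,Y}) }. -/
open MeasureTheory ProbabilityTheory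
open scoped ENNReal

section Aux

variable {Ω : Type*} [MeasurableSpace Ω] {μ : Measure Ω} [IsProbabilityMeasure μ]

lemma aux_pow_int {Z : Ω → ℝ} (hZ : MemLp Z 4 μ) {i : ℕ} (hi : i ≤ 4) :
    Integrable (fun ω => Z ω ^ i) μ := by
  have h4 : Integrable (fun ω => |Z ω| ^ (4 : ℕ)) μ := by
    have h := hZ.integrable_norm_rpow (by norm_num) (by norm_num)
    refine h.congr (Filter.Eventually.of_forall fun x => ?_)
    simp only [Real.norm_eq_abs, ENNReal.toReal_ofNat]
    rw [show ((4:ℝ)) = ((4:ℕ):ℝ) by norm_num, Real.rpow_natCast]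
  refine (h4.add (integrable_const 1)).mono' (hZ.aestronglyMeasurable.pow i)
    (Filter.Eventually.of_forall fun ω => ?_)
  simp only [Pi.add_apply, Real.norm_eq_abs, abs_pow]
  rcases le_total (|Z ω|) 1 with h | h
  · have h1 : |Z ω| ^ i ≤ 1 := pow_le_one₀ (abs_nonneg _) h
    have h2 : (0:ℝ) ≤ |Z ω| ^ 4 := pow_nonneg (abs_nonneg _) 4
    linarith
  · have h1 : |Z ω| ^ i ≤ |Z ω| ^ 4 := pow_le_pow_right₀ h hi
    linarith

end Aux

/-- For independent real random variables `X, Y` with finite fourth moments,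
`Var((X-Y)²/2) = ¼{μ₄X + μ₄Y + 2 μ₂X μ₂Y + 4 d² (μ₂X + μ₂Y) - (μ₂X - μ₂Y)² + 4 d (μ₃X - μ₃Y)}`,
where `μᵣ` denotes the `r`-th central moment and `d = EX - EY`. -/
theorem stmt_3 {Ω : Type*} [MeasurableSpace Ω] (μ : Measure Ω) [IsProbabilityMeasure μ]
    (X Y : Ω → ℝ) (hXY : IndepFun X Y μ)
    (hX : MemLp X 4 μ) (hY : MemLp Y 4 μ) :
    ProbabilityTheory.variance (fun ω => (X ω - Y ω) ^ 2 / 2) μ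
      = (1 / 4) * ((∫ ω, (X ω - ∫ ω', X ω' ∂μ) ^ 4 ∂μ)
          + (∫ ω, (Y ω - ∫ ω', Y ω' ∂μ) ^ 4 ∂μ)
          + 2 * (∫ ω, (X ω - ∫ ω', X ω' ∂μ) ^ 2 ∂μ) * (∫ ω, (Y ω - ∫ ω', Y ω' ∂μ) ^ 2 ∂μ)
          + 4 * ((∫ ω, X ω ∂μ) - ∫ ω, Y ω ∂μ) ^ 2 *
              ((∫ ω, (X ω - ∫ ω', X ω' ∂μ) ^ 2 ∂μ) + ∫ ω, (Y ω - ∫ ω', Y ω' ∂μ) ^ 2 ∂μ)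
          - ((∫ ω, (X ω - ∫ ω', X ω' ∂μ) ^ 2 ∂μ) - ∫ ω, (Y ω - ∫ ω', Y ω' ∂μ) ^ 2 ∂μ) ^ 2
          + 4 * ((∫ ω, X ω ∂μ) - ∫ ω, Y ω ∂μ) *
              ((∫ ω, (X ω - ∫ ω', X ω' ∂μ) ^ 3 ∂μ) - ∫ ω, (Y ω - ∫ ω', Y ω' ∂μ) ^ 3 ∂μ)) := by
  have hXm : Integrable X μ := hX.integrable (by norm_num)
  have hYm : Integrable Y μ := hY.integrable (by norm_num)
  set mX := ∫ ω', X ω' ∂μ with hmX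
  set mY := ∫ ω', Y ω' ∂μ with hmY
  have hX' : MemLp (fun ω => X ω - mX) 4 μ := hX.sub (memLp_const mX)
  have hY' : MemLp (fun ω => Y ω - mY) 4 μ := hY.sub (memLp_const mY)
  have hind : IndepFun (fun ω => X ω - mX) (fun ω => Y ω - mY) μ :=
    hXY.comp (measurable_id.sub_const mX) (measurable_id.sub_const mY)
  have Kc : ∀ (c : ℝ) (i j : ℕ), i ≤ 4 → j ≤ 4 →
      Integrable (fun ω => c * ((X ω - mX) ^ i * (Y ω - mY) ^ j)) μ := by
    intro c i j hi hj
    exact ((hind.comp (measurable_id.pow_const i) (measurable_id.pow_const j)).integrable_mul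
      (aux_pow_int hX' hi) (aux_pow_int hY' hj)).const_mul c
  have key : ∀ (c : ℝ) (i j : ℕ), i ≤ 4 → j ≤ 4 →
      ∫ ω, c * ((X ω - mX) ^ i * (Y ω - mY) ^ j) ∂μ
        = c * ((∫ ω, (X ω - mX) ^ i ∂μ) * (∫ ω, (Y ω - mY) ^ j ∂μ)) := by
    intro c i j hi hj
    rw [integral_const_mul]
    congr 1
    exact (hind.comp (measurable_id.pow_const i) (measurable_id.pow_const j)).integral_mul_eq_mul_integral
      (hX'.aestronglyMeasurable.pow i) (hY'.aestronglyMeasurable.pow j)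
  have hP0 : ∫ ω, (X ω - mX) ^ 0 ∂μ = 1 := by simp
  have hQ0 : ∫ ω, (Y ω - mY) ^ 0 ∂μ = 1 := by simp
  have hP1 : ∫ ω, (X ω - mX) ^ 1 ∂μ = 0 := by
    simp only [pow_one]
    rw [integral_sub hXm (integrable_const mX), integral_const, ← hmX]
    simp
  have hQ1 : ∫ ω, (Y ω - mY) ^ 1 ∂μ = 0 := by
    simp only [pow_one]
    rw [integral_sub hYm (integrable_const mY), integral_const, ← hmY]
    simp
  have hE2 : ∫ ω, (X ω - Y ω) ^ 2 ∂μ = (∫ ω, (X ω - mX) ^ 2 ∂μ) + (∫ ω, (Y ω - mY) ^ 2 ∂μ) + (mX - mY) ^ 2 := by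
    have e : (fun ω => (X ω - Y ω) ^ 2) = fun ω => (1:ℝ) * ((X ω - mX) ^ 2 * (Y ω - mY) ^ 0) + ((1:ℝ) * ((X ω - mX) ^ 0 * (Y ω - mY) ^ 2) + ((-2:ℝ) * ((X ω - mX) ^ 1 * (Y ω - mY) ^ 1) + ((2*(mX-mY)) * ((X ω - mX) ^ 1 * (Y ω - mY) ^ 0) + ((-2*(mX-mY)) * ((X ω - mX) ^ 0 * (Y ω - mY) ^ 1) + (((mX-mY)^2) * ((X ω - mX) ^ 0 * (Y ω - mY) ^ 0)))))) := by
      funext ω; ring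
    rw [e]
    have t5 : Integrable (fun ω => ((mX-mY)^2) * ((X ω - mX) ^ 0 * (Y ω - mY) ^ 0)) μ := Kc ((mX-mY)^2) 0 0 (by norm_num) (by norm_num)
    have t4 : Integrable (fun ω => (-2*(mX-mY)) * ((X ω - mX) ^ 0 * (Y ω - mY) ^ 1) + (((mX-mY)^2) * ((X ω - mX) ^ 0 * (Y ω - mY) ^ 0))) μ := (Kc (-2*(mX-mY)) 0 1 (by norm_num) (by norm_num)).add t5
    have t3 : Integrable (fun ω => (2*(mX-mY)) * ((X ω - mX) ^ 1 * (Y ω - mY) ^ 0) + ((-2*(mX-mY)) * ((X ω - mX) ^ 0 * (Y ω - mY) ^ 1) + (((mX-mY)^2) * ((X ω - mX) ^ 0 * (Y ω - mY) ^ 0)))) μ := (Kc (2*(mX-mY)) 1 0 (by norm_num) (by norm_num)).add t4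
    have t2 : Integrable (fun ω => (-2:ℝ) * ((X ω - mX) ^ 1 * (Y ω - mY) ^ 1) + ((2*(mX-mY)) * ((X ω - mX) ^ 1 * (Y ω - mY) ^ 0) + ((-2*(mX-mY)) * ((X ω - mX) ^ 0 * (Y ω - mY) ^ 1) + (((mX-mY)^2) * ((X ω - mX) ^ 0 * (Y ω - mY) ^ 0))))) μ := (Kc (-2:ℝ) 1 1 (by norm_num) (by norm_num)).add t3
    have t1 : Integrable (fun ω => (1:ℝ) * ((X ω - mX) ^ 0 * (Y ω - mY) ^ 2) + ((-2:ℝ) * ((X ω - mX) ^ 1 * (Y ω - mY) ^ 1) + ((2*(mX-mY)) * ((X ω - mX) ^ 1 * (Y ω - mY) ^ 0) + ((-2*(mX-mY)) * ((X ω - mX) ^ 0 * (Y ω - mY) ^ 1) + (((mX-mY)^2) * ((X ω - mX) ^ 0 * (Y ω - mY) ^ 0)))))) μ := (Kc (1:ℝ) 0 2 (by norm_num) (by norm_num)).add t2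
    rw [integral_add (Kc (1:ℝ) 2 0 (by norm_num) (by norm_num)) t1,
      integral_add (Kc (1:ℝ) 0 2 (by norm_num) (by norm_num)) t2,
      integral_add (Kc (-2:ℝ) 1 1 (by norm_num) (by norm_num)) t3,
      integral_add (Kc (2*(mX-mY)) 1 0 (by norm_num) (by norm_num)) t4,
      integral_add (Kc (-2*(mX-mY)) 0 1 (by norm_num) (by norm_num)) t5]
    rw [key (1:ℝ) 2 0 (by norm_num) (by norm_num),
      key (1:ℝ) 0 2 (by norm_num) (by norm_num),
      key (-2:ℝ) 1 1 (by norm_num) (by norm_num),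
      key (2*(mX-mY)) 1 0 (by norm_num) (by norm_num),
      key (-2*(mX-mY)) 0 1 (by norm_num) (by norm_num),
      key ((mX-mY)^2) 0 0 (by norm_num) (by norm_num)]
    rw [hP0, hQ0, hP1, hQ1]
    ring
  have hE4 : ∫ ω, (X ω - Y ω) ^ 4 ∂μ = (∫ ω, (X ω - mX) ^ 4 ∂μ) + (∫ ω, (Y ω - mY) ^ 4 ∂μ) + 6 * (∫ ω, (X ω - mX) ^ 2 ∂μ) * (∫ ω, (Y ω - mY) ^ 2 ∂μ) + 4 * (mX - mY) * ((∫ ω, (X ω - mX) ^ 3 ∂μ) - (∫ ω, (Y ω - mY) ^ 3 ∂μ)) + 6 * (mX - mY) ^ 2 * ((∫ ω, (X ω - mX) ^ 2 ∂μ) + (∫ ω, (Y ω - mY) ^ 2 ∂μ)) + (mX - mY) ^ 4 := by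
    have e : (fun ω => (X ω - Y ω) ^ 4) = fun ω => (1:ℝ) * ((X ω - mX) ^ 4 * (Y ω - mY) ^ 0) + ((1:ℝ) * ((X ω - mX) ^ 0 * (Y ω - mY) ^ 4) + ((-4:ℝ) * ((X ω - mX) ^ 3 * (Y ω - mY) ^ 1) + ((-4:ℝ) * ((X ω - mX) ^ 1 * (Y ω - mY) ^ 3) + ((6:ℝ) * ((X ω - mX) ^ 2 * (Y ω - mY) ^ 2) + ((4*(mX-mY)) * ((X ω - mX) ^ 3 * (Y ω - mY) ^ 0) + ((-4*(mX-mY)) * ((X ω - mX) ^ 0 * (Y ω - mY) ^ 3) + ((-12*(mX-mY)) * ((X ω - mX) ^ 2 * (Y ω - mY) ^ 1) + ((12*(mX-mY)) * ((X ω - mX) ^ 1 * (Y ω - mY) ^ 2) + ((6*(mX-mY)^2) * ((X ω - mX) ^ 2 * (Y ω - mY) ^ 0) + ((6*(mX-mY)^2) * ((X ω - mX) ^ 0 * (Y ω - mY) ^ 2) + ((-12*(mX-mY)^2) * ((X ω - mX) ^ 1 * (Y ω - mY) ^ 1) + ((4*(mX-mY)^3) * ((X ω - mX) ^ 1 * (Y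 ω - mY) ^ 0) + ((-4*(mX-mY)^3) * ((X ω - mX) ^ 0 * (Y ω - mY) ^ 1) + (((mX-mY)^4) * ((X ω - mX) ^ 0 * (Y ω - mY) ^ 0))))))))))))))) := by
      funext ω; ring
    rw [e]
    have t14 : Integrable (fun ω => ((mX-mY)^4) * ((X ω - mX) ^ 0 * (Y ω - mY) ^ 0)) μ := Kc ((mX-mY)^4) 0 0 (by norm_num) (by norm_num)
    have t13 : Integrable (fun ω => (-4*(mX-mY)^3) * ((X ω - mX) ^ 0 * (Y ω - mY) ^ 1) + (((mX-mY)^4) * ((X ω - mX) ^ 0 * (Y ω - mY) ^ 0))) μ := (Kc (-4*(mX-mY)^3) 0 1 (by norm_num) (by norm_num)).add t14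
    have t12 : Integrable (fun ω => (4*(mX-mY)^3) * ((X ω - mX) ^ 1 * (Y ω - mY) ^ 0) + ((-4*(mX-mY)^3) * ((X ω - mX) ^ 0 * (Y ω - mY) ^ 1) + (((mX-mY)^4) * ((X ω - mX) ^ 0 * (Y ω - mY) ^ 0)))) μ := (Kc (4*(mX-mY)^3) 1 0 (by norm_num) (by norm_num)).add t13
    have t11 : Integrable (fun ω => (-12*(mX-mY)^2) * ((X ω - mX) ^ 1 * (Y ω - mY) ^ 1) + ((4*(mX-mY)^3) * ((X ω - mX) ^ 1 * (Y ω - mY) ^ 0) + ((-4*(mX-mY)^3) * ((X ω - mX) ^ 0 * (Y ω - mY) ^ 1) + (((mX-mY)^4) * ((X ω - mX) ^ 0 * (Y ω - mY) ^ 0))))) μ := (Kc (-12*(mX-mY)^2) 1 1 (by norm_num) (by norm_num)).add t12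
    have t10 : Integrable (fun ω => (6*(mX-mY)^2) * ((X ω - mX) ^ 0 * (Y ω - mY) ^ 2) + ((-12*(mX-mY)^2) * ((X ω - mX) ^ 1 * (Y ω - mY) ^ 1) + ((4*(mX-mY)^3) * ((X ω - mX) ^ 1 * (Y ω - mY) ^ 0) + ((-4*(mX-mY)^3) * ((X ω - mX) ^ 0 * (Y ω - mY) ^ 1) + (((mX-mY)^4) * ((X ω - mX) ^ 0 * (Y ω - mY) ^ 0)))))) μ := (Kc (6*(mX-mY)^2) 0 2 (by norm_num) (by norm_num)).add t11
    have t9 : Integrable (fun ω => (6*(mX-mY)^2) * ((X ω - mX) ^ 2 * (Y ω - mY) ^ 0) + ((6*(mX-mY)^2) * ((X ω - mX) ^ 0 * (Y ω - mY) ^ 2) + ((-12*(mX-mY)^2) * ((X ω - mX) ^ 1 * (Y ω - mY) ^ 1) + ((4*(mX-mY)^3) * ((X ω - mX) ^ 1 * (Y ω - mY) ^ 0) + ((-4*(mX-mY)^3) * ((X ω - mX) ^ 0 * (Y ω - mY) ^ 1) + (((mX-mY)^4) * ((X ω - mX) ^ 0 * (Y ω - mY) ^ 0))))))) μ := (Kc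 (6*(mX-mY)^2) 2 0 (by norm_num) (by norm_num)).add t10
    have t8 : Integrable (fun ω => (12*(mX-mY)) * ((X ω - mX) ^ 1 * (Y ω - mY) ^ 2) + ((6*(mX-mY)^2) * ((X ω - mX) ^ 2 * (Y ω - mY) ^ 0) + ((6*(mX-mY)^2) * ((X ω - mX) ^ 0 * (Y ω - mY) ^ 2) + ((-12*(mX-mY)^2) * ((X ω - mX) ^ 1 * (Y ω - mY) ^ 1) + ((4*(mX-mY)^3) * ((X ω - mX) ^ 1 * (Y ω - mY) ^ 0) + ((-4*(mX-mY)^3) * ((X ω - mX) ^ 0 * (Y ω - mY) ^ 1) + (((mX-mY)^4) * ((X ω - mX) ^ 0 * (Y ω - mY) ^ 0)))))))) μ := (Kc (12*(mX-mY)) 1 2 (by norm_num) (by norm_num)).add t9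
    have t7 : Integrable (fun ω => (-12*(mX-mY)) * ((X ω - mX) ^ 2 * (Y ω - mY) ^ 1) + ((12*(mX-mY)) * ((X ω - mX) ^ 1 * (Y ω - mY) ^ 2) + ((6*(mX-mY)^2) * ((X ω - mX) ^ 2 * (Y ω - mY) ^ 0) + ((6*(mX-mY)^2) * ((X ω - mX) ^ 0 * (Y ω - mY) ^ 2) + ((-12*(mX-mY)^2) * ((X ω - mX) ^ 1 * (Y ω - mY) ^ 1) + ((4*(mX-mY)^3) * ((X ω - mX) ^ 1 * (Y ω - mY) ^ 0) + ((-4*(mX-mY)^3) * ((X ω - mX) ^ 0 * (Y ω - mY) ^ 1) + (((mX-mY)^4) * ((X ω - mX) ^ 0 * (Y ω - mY) ^ 0))))))))) μ := (Kc (-12*(mX-mY)) 2 1 (by norm_num) (by norm_num)).add t8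
    have t6 : Integrable (fun ω => (-4*(mX-mY)) * ((X ω - mX) ^ 0 * (Y ω - mY) ^ 3) + ((-12*(mX-mY)) * ((X ω - mX) ^ 2 * (Y ω - mY) ^ 1) + ((12*(mX-mY)) * ((X ω - mX) ^ 1 * (Y ω - mY) ^ 2) + ((6*(mX-mY)^2) * ((X ω - mX) ^ 2 * (Y ω - mY) ^ 0) + ((6*(mX-mY)^2) * ((X ω - mX) ^ 0 * (Y ω - mY) ^ 2) + ((-12*(mX-mY)^2) * ((X ω - mX) ^ 1 * (Y ω - mY) ^ 1) + ((4*(mX-mY)^3) * ((X ω - mX) ^ 1 * (Y ω - mY) ^ 0) + ((-4*(mX-mY)^3) * ((X ω - mX) ^ 0 * (Y ω - mY) ^ 1) + (((mX-mY)^4) * ((X ω - mX) ^ 0 * (Y ω - mY) ^ 0)))))))))) μ := (Kc (-4*(mX-mY)) 0 3 (by norm_num) (by norm_num)).add t7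
    have t5 : Integrable (fun ω => (4*(mX-mY)) * ((X ω - mX) ^ 3 * (Y ω - mY) ^ 0) + ((-4*(mX-mY)) * ((X ω - mX) ^ 0 * (Y ω - mY) ^ 3) + ((-12*(mX-mY)) * ((X ω - mX) ^ 2 * (Y ω - mY) ^ 1) + ((12*(mX-mY)) * ((X ω - mX) ^ 1 * (Y ω - mY) ^ 2) + ((6*(mX-mY)^2) * ((X ω - mX) ^ 2 * (Y ω - mY) ^ 0) + ((6*(mX-mY)^2) * ((X ω - mX) ^ 0 * (Y ω - mY) ^ 2) + ((-12*(mX-mY)^2) * ((X ω - mX) ^ 1 * (Y ω - mY) ^ 1) + ((4*(mX-mY)^3) * ((X ω - mX) ^ 1 * (Y ω - mY) ^ 0) + ((-4*(mX-mY)^3) * ((X ω - mX) ^ 0 * (Y ω - mY) ^ 1) + (((mX-mY)^4) * ((X ω - mX) ^ 0 * (Y ω - mY) ^ 0))))))))))) μ := (Kc (4*(mX-mY)) 3 0 (by norm_num) (by norm_num)).add t6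
    have t4 : Integrable (fun ω => (6:ℝ) * ((X ω - mX) ^ 2 * (Y ω - mY) ^ 2) + ((4*(mX-mY)) * ((X ω - mX) ^ 3 * (Y ω - mY) ^ 0) + ((-4*(mX-mY)) * ((X ω - mX) ^ 0 * (Y ω - mY) ^ 3) + ((-12*(mX-mY)) * ((X ω - mX) ^ 2 * (Y ω - mY) ^ 1) + ((12*(mX-mY)) * ((X ω - mX) ^ 1 * (Y ω - mY) ^ 2) + ((6*(mX-mY)^2) * ((X ω - mX) ^ 2 * (Y ω - mY) ^ 0) + ((6*(mX-mY)^2) * ((X ω - mX) ^ 0 * (Y ω - mY) ^ 2) + ((-12*(mX-mY)^2) * ((X ω - mX) ^ 1 * (Y ω - mY) ^ 1) + ((4*(mX-mY)^3) * ((X ω - mX) ^ 1 * (Y ω - mY) ^ 0) + ((-4*(mX-mY)^3) * ((X ω - mX) ^ 0 * (Y ω - mY) ^ 1) + (((mX-mY)^4) * ((X ω - mX) ^ 0 * (Y ω - mY) ^ 0)))))))))))) μ := (Kc (6:ℝ) 2 2 (by norm_num) (by norm_num)).add t5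
    have t3 : Integrable (fun ω => (-4:ℝ) * ((X ω - mX) ^ 1 * (Y ω - mY) ^ 3) + ((6:ℝ) * ((X ω - mX) ^ 2 * (Y ω - mY) ^ 2) + ((4*(mX-mY)) * ((X ω - mX) ^ 3 * (Y ω - mY) ^ 0) + ((-4*(mX-mY)) * ((X ω - mX) ^ 0 * (Y ω - mY) ^ 3) + ((-12*(mX-mY)) * ((X ω - mX) ^ 2 * (Y ω - mY) ^ 1) + ((12*(mX-mY)) * ((X ω - mX) ^ 1 * (Y ω - mY) ^ 2) + ((6*(mX-mY)^2) * ((X ω - mX) ^ 2 * (Y ω - mY) ^ 0) + ((6*(mX-mY)^2) * ((X ω - mX) ^ 0 * (Y ω - mY) ^ 2) + ((-12*(mX-mY)^2) * ((X ω - mX) ^ 1 * (Y ω - mY) ^ 1) + ((4*(mX-mY)^3) * ((X ω - mX) ^ 1 * (Y ω - mY) ^ 0) + ((-4*(mX-mY)^3) * ((X ω - mX) ^ 0 * (Y ω - mY) ^ 1) + (((mX-mY)^4) * ((X ω - mX) ^ 0 * (Y ω - mY) ^ 0))))))))))))) μ := (Kc (-4:ℝ) 1 3 (by norm_num) (by norm_num)).add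 t4
    have t2 : Integrable (fun ω => (-4:ℝ) * ((X ω - mX) ^ 3 * (Y ω - mY) ^ 1) + ((-4:ℝ) * ((X ω - mX) ^ 1 * (Y ω - mY) ^ 3) + ((6:ℝ) * ((X ω - mX) ^ 2 * (Y ω - mY) ^ 2) + ((4*(mX-mY)) * ((X ω - mX) ^ 3 * (Y ω - mY) ^ 0) + ((-4*(mX-mY)) * ((X ω - mX) ^ 0 * (Y ω - mY) ^ 3) + ((-12*(mX-mY)) * ((X ω - mX) ^ 2 * (Y ω - mY) ^ 1) + ((12*(mX-mY)) * ((X ω - mX) ^ 1 * (Y ω - mY) ^ 2) + ((6*(mX-mY)^2) * ((X ω - mX) ^ 2 * (Y ω - mY) ^ 0) + ((6*(mX-mY)^2) * ((X ω - mX) ^ 0 * (Y ω - mY) ^ 2) + ((-12*(mX-mY)^2) * ((X ω - mX) ^ 1 * (Y ω - mY) ^ 1) + ((4*(mX-mY)^3) * ((X ω - mX) ^ 1 * (Y ω - mY) ^ 0) + ((-4*(mX-mY)^3) * ((X ω - mX) ^ 0 * (Y ω - mY) ^ 1) + (((mX-mY)^4) * ((X ω - mX) ^ 0 * (Y ω -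 mY) ^ 0)))))))))))))) μ := (Kc (-4:ℝ) 3 1 (by norm_num) (by norm_num)).add t3
    have t1 : Integrable (fun ω => (1:ℝ) * ((X ω - mX) ^ 0 * (Y ω - mY) ^ 4) + ((-4:ℝ) * ((X ω - mX) ^ 3 * (Y ω - mY) ^ 1) + ((-4:ℝ) * ((X ω - mX) ^ 1 * (Y ω - mY) ^ 3) + ((6:ℝ) * ((X ω - mX) ^ 2 * (Y ω - mY) ^ 2) + ((4*(mX-mY)) * ((X ω - mX) ^ 3 * (Y ω - mY) ^ 0) + ((-4*(mX-mY)) * ((X ω - mX) ^ 0 * (Y ω - mY) ^ 3) + ((-12*(mX-mY)) * ((X ω - mX) ^ 2 * (Y ω - mY) ^ 1) + ((12*(mX-mY)) * ((X ω - mX) ^ 1 * (Y ω - mY) ^ 2) + ((6*(mX-mY)^2) * ((X ω - mX) ^ 2 * (Y ω - mY) ^ 0) + ((6*(mX-mY)^2) * ((X ω - mX) ^ 0 * (Y ω - mY) ^ 2) + ((-12*(mX-mY)^2) * ((X ω - mX) ^ 1 * (Y ω - mY) ^ 1) + ((4*(mX-mY)^3) * ((X ω - mX) ^ 1 * (Y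 ω - mY) ^ 0) + ((-4*(mX-mY)^3) * ((X ω - mX) ^ 0 * (Y ω - mY) ^ 1) + (((mX-mY)^4) * ((X ω - mX) ^ 0 * (Y ω - mY) ^ 0))))))))))))))) μ := (Kc (1:ℝ) 0 4 (by norm_num) (by norm_num)).add t2
    rw [integral_add (Kc (1:ℝ) 4 0 (by norm_num) (by norm_num)) t1,
      integral_add (Kc (1:ℝ) 0 4 (by norm_num) (by norm_num)) t2,
      integral_add (Kc (-4:ℝ) 3 1 (by norm_num) (by norm_num)) t3,
      integral_add (Kc (-4:ℝ) 1 3 (by norm_num) (by norm_num)) t4,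
      integral_add (Kc (6:ℝ) 2 2 (by norm_num) (by norm_num)) t5,
      integral_add (Kc (4*(mX-mY)) 3 0 (by norm_num) (by norm_num)) t6,
      integral_add (Kc (-4*(mX-mY)) 0 3 (by norm_num) (by norm_num)) t7,
      integral_add (Kc (-12*(mX-mY)) 2 1 (by norm_num) (by norm_num)) t8,
      integral_add (Kc (12*(mX-mY)) 1 2 (by norm_num) (by norm_num)) t9,
      integral_add (Kc (6*(mX-mY)^2) 2 0 (by norm_num) (by norm_num)) t10,
      integral_add (Kc (6*(mX-mY)^2) 0 2 (by norm_num) (by norm_num)) t11,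
      integral_add (Kc (-12*(mX-mY)^2) 1 1 (by norm_num) (by norm_num)) t12,
      integral_add (Kc (4*(mX-mY)^3) 1 0 (by norm_num) (by norm_num)) t13,
      integral_add (Kc (-4*(mX-mY)^3) 0 1 (by norm_num) (by norm_num)) t14]
    rw [key (1:ℝ) 4 0 (by norm_num) (by norm_num),
      key (1:ℝ) 0 4 (by norm_num) (by norm_num),
      key (-4:ℝ) 3 1 (by norm_num) (by norm_num),
      key (-4:ℝ) 1 3 (by norm_num) (by norm_num),
      key (6:ℝ) 2 2 (by norm_num) (by norm_num),
      key (4*(mX-mY)) 3 0 (by norm_num) (by norm_num),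
      key (-4*(mX-mY)) 0 3 (by norm_num) (by norm_num),
      key (-12*(mX-mY)) 2 1 (by norm_num) (by norm_num),
      key (12*(mX-mY)) 1 2 (by norm_num) (by norm_num),
      key (6*(mX-mY)^2) 2 0 (by norm_num) (by norm_num),
      key (6*(mX-mY)^2) 0 2 (by norm_num) (by norm_num),
      key (-12*(mX-mY)^2) 1 1 (by norm_num) (by norm_num),
      key (4*(mX-mY)^3) 1 0 (by norm_num) (by norm_num),
      key (-4*(mX-mY)^3) 0 1 (by norm_num) (by norm_num),
      key ((mX-mY)^4) 0 0 (by norm_num) (by norm_num)]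
    rw [hP0, hQ0, hP1, hQ1]
    ring
  have hW4 : MemLp (fun ω => X ω - Y ω) 4 μ := hX.sub hY
  have hWsq : MemLp (fun ω => (X ω - Y ω) ^ 2) 2 μ := by
    have h := hW4.smul (φ := fun ω => X ω - Y ω) hW4 (p := 4)
      (q := 4) (r := 2) (hpqr := ⟨by
        rw [← two_mul, show ((4:ℝ≥0∞)) = 2 * 2 by norm_num,
          ENNReal.mul_inv (by norm_num) (by norm_num), ← mul_assoc,
          ENNReal.mul_inv_cancel (by norm_num) (by norm_num), one_mul]⟩)
    exact h.ae_eq (Filter.Eventually.of_forall fun ω => by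
      simp [Pi.smul_apply', smul_eq_mul, sq])
  have hW2 : MemLp (fun ω => (X ω - Y ω) ^ 2 / 2) 2 μ := by
    have h := hWsq.const_mul (1/2 : ℝ)
    have e : (fun ω => (1/2 : ℝ) * (X ω - Y ω) ^ 2) = fun ω => (X ω - Y ω) ^ 2 / 2 := by
      funext ω; ring
    rwa [e] at h
  rw [variance_eq_sub hW2]
  have hsq : (fun ω => (X ω - Y ω) ^ 2 / 2) ^ 2 = fun ω => (X ω - Y ω) ^ 4 / 4 := by
    funext ω
    simp only [Pi.pow_apply]
    ring
  rw [hsq]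
  rw [show (μ[fun ω => (X ω - Y ω) ^ 4 / 4]) = (∫ ω, (X ω - Y ω) ^ 4 ∂μ) / 4 from
    integral_div 4 _]
  rw [show (μ[fun ω => (X ω - Y ω) ^ 2 / 2]) = (∫ ω, (X ω - Y ω) ^ 2 ∂μ) / 2 from
    integral_div 2 _]
  rw [hE2, hE4]
  ring
end

section
/- For g = 1,…,H let y_{g1}, y_{g2} be real-valued random variables, all 2H of them mutually independent with finite fourth moments, and suppose that within each group the central moments agree: Var(y_{g1}) = Var(y_{g2}) = S²_g, E[(y_{g1} − E y_{g1})³] = E[(y_{g2} − E y_{g2})³], and E[(y_{g1} − E y_{g1})⁴] = E[(y_{g2} − E y_{g2})⁴] = μ_{4,g}. Write d_g = E y_{g1} − E y_{g2}, v = (1/(2H²)) Σ_g (y_{g1} − y_{g2})²/2, and V = (1/(4H²)) Σ_g 2 S²_g. Then E[(v − V)²] = (1/(8H⁴)) Σ_{g=1}^H { μ_{4,g} + (S²_g)² + 4 S²_g d_g² } + (1/(16H⁴)) ( Σ_{g=1}^H d_g² )². -/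
open MeasureTheory ProbabilityTheory BigOperators

/-- Mean of a real random variable. -/
noncomputable def rvMean {Ω : Type*} [MeasurableSpace Ω] (μ : Measure Ω) (X : Ω → ℝ) : ℝ :=
  ∫ ω, X ω ∂μ

/-- `r`-th central moment of a real random variable. -/
noncomputable def cmoment {Ω : Type*} [MeasurableSpace Ω] (μ : Measure Ω) (X : Ω → ℝ)
    (r : ℕ) : ℝ :=
  ∫ ω, (X ω - rvMean μ X) ^ r ∂μ

set_option maxHeartbeats 1600000

section Helpers
variable {Ω : Type*} [MeasurableSpace Ω] {μ : Measure Ω}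


/-- transfer iIndepFun along a.e. equality -/
lemma myIIndep_ae_eq {ι : Type*} {β : ι → Type*} [m : ∀ i, MeasurableSpace (β i)]
    {f g : ∀ i, Ω → β i} (hf : iIndepFun f μ) (h : ∀ i, f i =ᵐ[μ] g i) :
    iIndepFun g μ := by
  rw [iIndepFun_iff_measure_inter_preimage_eq_mul] at hf ⊢
  intro S sets hsets
  have key : ∀ (T : Finset ι), μ (⋂ i ∈ T, g i ⁻¹' sets i) = μ (⋂ i ∈ T, f i ⁻¹' sets i) := by
    intro T
    apply measure_congr
    have hT : ∀ᵐ ω ∂μ, ∀ i ∈ T, f i ω = g i ω :=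
      (Filter.eventually_all_finset T).2 fun i _ => h i
    filter_upwards [hT] with ω hω
    show (ω ∈ ⋂ i ∈ T, g i ⁻¹' sets i) = (ω ∈ ⋂ i ∈ T, f i ⁻¹' sets i)
    simp only [eq_iff_iff, Set.mem_iInter, Set.mem_preimage]
    constructor
    · intro h' i hi; rw [hω i hi]; exact h' i hi
    · intro h' i hi; rw [← hω i hi]; exact h' i hi
  have key1 : ∀ i ∈ S, μ (g i ⁻¹' sets i) = μ (f i ⁻¹' sets i) := by
    intro i hi
    have := key {i}
    simpa using this
  rw [key S, hf S hsets]
  exact (Finset.prod_congr rfl key1).symm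

/-- integrability of powers up to 4 -/
lemma myIntegrablePow [IsFiniteMeasure μ] {f : Ω → ℝ} (hf : MemLp f 4 μ)
    {k : ℕ} (hk : k ≤ 4) : Integrable (fun ω => f ω ^ k) μ := by
  rcases Nat.eq_zero_or_pos k with rfl | hk0
  · simpa using integrable_const (1:ℝ)
  have hfk : MemLp f (k : ENNReal) μ :=
    hf.mono_exponent (by exact_mod_cast hk)
  have h1 := hfk.integrable_norm_rpow (by exact_mod_cast hk0.ne') (by simp)
  refine h1.mono' ((hf.aestronglyMeasurable.aemeasurable.pow_const k).aestronglyMeasurable) ?_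
  filter_upwards with ω
  simp [Real.norm_eq_abs, abs_pow, ENNReal.toReal_natCast, Real.rpow_natCast]

lemma myMemLp_sq {f : Ω → ℝ} (hf : MemLp f 4 μ) : MemLp (fun ω => f ω ^ 2) 2 μ := by
  have h := MemLp.smul (𝕜 := ℝ) hf hf (p := 4) (q := 4) (r := 2)
    (hpqr := ⟨by rw [show (4:ENNReal) = 2*2 by norm_num, ENNReal.mul_inv (by simp) (by simp),
          ← two_mul, ← mul_assoc, ENNReal.mul_inv_cancel (by simp) (by simp), one_mul]⟩)
  have e : (f • f) = fun ω => f ω ^ 2 := by funext ω; simp [sq]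
  rwa [e] at h

lemma myIntegrableMulL2 [IsFiniteMeasure μ] {f g : Ω → ℝ} (hf : MemLp f 2 μ) (hg : MemLp g 2 μ) :
    Integrable (fun ω => f ω * g ω) μ := by
  have h := MemLp.smul (𝕜 := ℝ) hg hf (p := 2) (q := 2) (r := 1)
    (hpqr := ⟨by simp [ENNReal.inv_two_add_inv_two]⟩)
  have e : (f • g) = fun ω => f ω * g ω := by funext ω; simp
  rw [e] at h
  exact h.integrable le_rfl

lemma myPairMoments (μ : Measure Ω) [IsProbabilityMeasure μ]
    {u w : Ω → ℝ} (hu : MemLp u 4 μ) (hw : MemLp w 4 μ)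
    (hind : IndepFun u w μ) (d S c3 m4 : ℝ)
    (hu1 : ∫ ω, u ω ∂μ = 0) (hw1 : ∫ ω, w ω ∂μ = 0)
    (hu2 : ∫ ω, u ω^2 ∂μ = S) (hw2 : ∫ ω, w ω^2 ∂μ = S)
    (hu3 : ∫ ω, u ω^3 ∂μ = c3) (hw3 : ∫ ω, w ω^3 ∂μ = c3)
    (hu4 : ∫ ω, u ω^4 ∂μ = m4) (hw4 : ∫ ω, w ω^4 ∂μ = m4) :
    (∫ ω, (u ω - w ω + d)^2 ∂μ = 2*S + d^2) ∧
    (∫ ω, (u ω - w ω + d)^4 ∂μ = 2*m4 + 6*S^2 + 12*S*d^2 + d^4) := by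
  have hiu : ∀ k, k ≤ 4 → Integrable (fun ω => u ω ^ k) μ := fun k hk => myIntegrablePow hu hk
  have hiw : ∀ k, k ≤ 4 → Integrable (fun ω => w ω ^ k) μ := fun k hk => myIntegrablePow hw hk
  have hindp : ∀ a b : ℕ, IndepFun (fun ω => u ω ^ a) (fun ω => w ω ^ b) μ := fun a b =>
    hind.comp (measurable_id.pow_const a) (measurable_id.pow_const b)
  have hiprod : ∀ a b : ℕ, a ≤ 4 → b ≤ 4 → Integrable (fun ω => u ω ^ a * w ω ^ b) μ :=
    fun a b ha hb => (hindp a b).integrable_mul (hiu a ha) (hiw b hb)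
  have hprod : ∀ a b : ℕ, a ≤ 4 → b ≤ 4 →
      ∫ ω, u ω ^ a * w ω ^ b ∂μ = (∫ ω, u ω ^ a ∂μ) * ∫ ω, w ω ^ b ∂μ :=
    fun a b ha hb => (hindp a b).integral_fun_mul_eq_mul_integral (hiu a ha).aestronglyMeasurable (hiw b hb).aestronglyMeasurable
  have hu1' : ∫ ω, u ω ^ 1 ∂μ = 0 := by simpa using hu1
  have hw1' : ∫ ω, w ω ^ 1 ∂μ = 0 := by simpa using hw1
  have hT : MemLp (fun ω => u ω - w ω) 4 μ := hu.sub hw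
  have hit : ∀ k, k ≤ 4 → Integrable (fun ω => (u ω - w ω) ^ k) μ :=
    fun k hk => myIntegrablePow hT hk
  have hB : Integrable (fun ω => u ω - w ω) μ := by
    simpa using hit 1 (by norm_num)
  have m1 : ∫ ω, (u ω - w ω) ∂μ = 0 := by
    rw [integral_sub (hu.integrable (by norm_num)) (hw.integrable (by norm_num)), hu1, hw1]; ring
  have m2 : ∫ ω, (u ω - w ω)^2 ∂μ = 2*S := by
    have e : (fun ω => (u ω - w ω)^2)
        = fun ω => (u ω^2 + w ω^2) - 2*(u ω^1 * w ω^1) := by funext ω; ring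
    rw [e, integral_sub, integral_add, integral_const_mul,
      hprod 1 1 (by norm_num) (by norm_num), hu2, hw2, hu1', hw1']
    · ring
    all_goals
      repeat'
        first
        | exact hiu _ (by norm_num)
        | exact hiw _ (by norm_num)
        | exact hit _ (by norm_num)
        | exact hB
        | exact hiprod _ _ (by norm_num) (by norm_num)
        | exact integrable_const _
        | apply Integrable.add
        | apply Integrable.const_mul
  have m3 : ∫ ω, (u ω - w ω)^3 ∂μ = 0 := by
    have e : (fun ω => (u ω - w ω)^3)
        = fun ω => (u ω^3 + 3*(u ω^1 * w ω^2)) - (w ω^3 + 3*(u ω^2 * w ω^1)) := by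
      funext ω; ring
    rw [e, integral_sub, integral_add, integral_add, integral_const_mul, integral_const_mul,
      hprod 1 2 (by norm_num) (by norm_num), hprod 2 1 (by norm_num) (by norm_num),
      hu3, hw3, hu1', hw1', hu2, hw2]
    · ring
    all_goals
      repeat'
        first
        | exact hiu _ (by norm_num)
        | exact hiw _ (by norm_num)
        | exact hit _ (by norm_num)
        | exact hB
        | exact hiprod _ _ (by norm_num) (by norm_num)
        | exact integrable_const _
        | apply Integrable.add
        | apply Integrable.const_mul
  have m4t : ∫ ω, (u ω - w ω)^4 ∂μ = 2*m4 + 6*S^2 := by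
    have e : (fun ω => (u ω - w ω)^4)
        = fun ω => ((u ω^4 + w ω^4) + 6*(u ω^2 * w ω^2))
            - (4*(u ω^3 * w ω^1) + 4*(u ω^1 * w ω^3)) := by
      funext ω; ring
    rw [e, integral_sub, integral_add, integral_add, integral_add,
      integral_const_mul, integral_const_mul, integral_const_mul,
      hprod 2 2 (by norm_num) (by norm_num), hprod 3 1 (by norm_num) (by norm_num),
      hprod 1 3 (by norm_num) (by norm_num),
      hu4, hw4, hu2, hw2, hu3, hw3, hu1', hw1']
    · ring
    all_goals
      repeat'
        first
        | exact hiu _ (by norm_num)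
        | exact hiw _ (by norm_num)
        | exact hit _ (by norm_num)
        | exact hB
        | exact hiprod _ _ (by norm_num) (by norm_num)
        | exact integrable_const _
        | apply Integrable.add
        | apply Integrable.const_mul
  constructor
  · have e : (fun ω => (u ω - w ω + d)^2)
        = fun ω => ((u ω - w ω)^2 + (2*d)*(u ω - w ω)) + d^2 := by funext ω; ring
    rw [e, integral_add, integral_add, integral_const_mul, integral_const, m2, m1]
    · simp [measure_univ]
    all_goals
      repeat'
        first
        | exact hiu _ (by norm_num)
        | exact hiw _ (by norm_num)
        | exact hit _ (by norm_num)
        | exact hB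
        | exact hiprod _ _ (by norm_num) (by norm_num)
        | exact integrable_const _
        | apply Integrable.add
        | apply Integrable.const_mul
  · have e : (fun ω => (u ω - w ω + d)^4)
        = fun ω => ((((u ω - w ω)^4 + (4*d)*(u ω - w ω)^3) + (6*d^2)*(u ω - w ω)^2)
            + (4*d^3)*(u ω - w ω)) + d^4 := by funext ω; ring
    rw [e, integral_add, integral_add, integral_add, integral_add,
      integral_const_mul, integral_const_mul, integral_const_mul, integral_const,
      m4t, m3, m2, m1]
    · simp only [measure_univ, probReal_univ, ENNReal.toReal_one, smul_eq_mul, one_mul]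
      ring
    all_goals
      repeat'
        first
        | exact hiu _ (by norm_num)
        | exact hiw _ (by norm_num)
        | exact hit _ (by norm_num)
        | exact hB
        | exact hiprod _ _ (by norm_num) (by norm_num)
        | exact integrable_const _
        | apply Integrable.add
        | apply Integrable.const_mul

lemma centered_mean (μ : Measure Ω) [IsProbabilityMeasure μ] {a : Ω → ℝ}
    (ha : MemLp a 4 μ) : ∫ ω, (a ω - rvMean μ a) ∂μ = 0 := by
  rw [integral_sub (ha.integrable (by norm_num)) (integrable_const _), integral_const]
  simp [rvMean]

lemma centered_sq (μ : Measure Ω) [IsProbabilityMeasure μ] {a : Ω → ℝ} {S : ℝ}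
    (ha : MemLp a 4 μ) (hv : variance a μ = S) :
    ∫ ω, (a ω - rvMean μ a)^2 ∂μ = S := by
  rw [← hv, variance_eq_integral ha.aemeasurable]
  rfl

lemma myGroupVals (μ : Measure Ω) [IsProbabilityMeasure μ] {a b : Ω → ℝ}
    (ha : MemLp a 4 μ) (hb : MemLp b 4 μ) (hab : IndepFun a b μ)
    (S m4 : ℝ) (hva : variance a μ = S) (hvb : variance b μ = S)
    (h3 : cmoment μ a 3 = cmoment μ b 3)
    (h4a : cmoment μ a 4 = m4) (h4b : cmoment μ b 4 = m4) :
    (∫ ω, ((a ω - b ω)^2 - 2*S) ∂μ = (rvMean μ a - rvMean μ b)^2) ∧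
    (∫ ω, ((a ω - b ω)^2 - 2*S)^2 ∂μ
       = 2*m4 + 2*S^2 + 8*S*(rvMean μ a - rvMean μ b)^2 + (rvMean μ a - rvMean μ b)^4) := by
  set ma := rvMean μ a with hma
  set mb := rvMean μ b with hmb
  set d := ma - mb with hdd
  have hu : MemLp (fun ω => a ω - ma) 4 μ := ha.sub (memLp_const ma)
  have hw : MemLp (fun ω => b ω - mb) 4 μ := hb.sub (memLp_const mb)
  have hind : IndepFun (fun ω => a ω - ma) (fun ω => b ω - mb) μ :=
    hab.comp (measurable_id.sub_const ma) (measurable_id.sub_const mb)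
  have P := myPairMoments μ hu hw hind d S (cmoment μ a 3) m4
    (centered_mean μ ha) (centered_mean μ hb)
    (centered_sq μ ha hva) (centered_sq μ hb hvb)
    rfl h3.symm h4a h4b
  have ee : ∀ ω, a ω - b ω = (a ω - ma) - (b ω - mb) + d := by intro ω; rw [hdd]; ring
  have habL : MemLp (fun ω => a ω - b ω) 4 μ := ha.sub hb
  have hi2 : Integrable (fun ω => (a ω - b ω)^2) μ := myIntegrablePow habL (by norm_num)
  have hi4 : Integrable (fun ω => (a ω - b ω)^4) μ := myIntegrablePow habL (by norm_num)
  have e2 : ∫ ω, (a ω - b ω)^2 ∂μ = 2*S + d^2 := by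
    rw [show (fun ω => (a ω - b ω)^2)
        = fun ω => ((a ω - ma) - (b ω - mb) + d)^2 from funext fun ω => by rw [ee ω]]
    exact P.1
  have e4 : ∫ ω, (a ω - b ω)^4 ∂μ = 2*m4 + 6*S^2 + 12*S*d^2 + d^4 := by
    rw [show (fun ω => (a ω - b ω)^4)
        = fun ω => ((a ω - ma) - (b ω - mb) + d)^4 from funext fun ω => by rw [ee ω]]
    exact P.2
  constructor
  · rw [integral_sub hi2 (integrable_const _), integral_const, e2]
    simp
  · have e : (fun ω => ((a ω - b ω)^2 - 2*S)^2)
        = fun ω => ((a ω - b ω)^4 - (4*S)*(a ω - b ω)^2) + (4*S^2) := by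
      funext ω; ring
    rw [e, integral_add, integral_sub, integral_const_mul, integral_const, e2, e4]
    · simp only [measure_univ, probReal_univ, ENNReal.toReal_one, smul_eq_mul, one_mul]
      ring
    · exact hi4
    · exact hi2.const_mul _
    · exact hi4.sub (hi2.const_mul _)
    · exact integrable_const _

end Helpers

/-- For `2H` mutually independent real random variables `y_{g,i}` with finite fourth moments
whose central moments agree within each group (`Var = S²_g`, equal third central moments,
equal fourth central moments `μ₄,g`), the collapsed strata variance estimator
`v = (1/(2H²)) ∑_g (y_{g1}-y_{g2})²/2` and `V = (1/(4H²)) ∑_g 2 S²_g` satisfy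
`E[(v-V)²] = (1/(8H⁴)) ∑_g {μ₄,g + (S²_g)² + 4 S²_g d_g²} + (1/(16H⁴)) (∑_g d_g²)²`,
where `d_g = E y_{g1} - E y_{g2}`. -/
theorem stmt_5 {Ω : Type*} [MeasurableSpace Ω] (μ : Measure Ω) [IsProbabilityMeasure μ]
    (H : ℕ) (hH : 1 ≤ H) (y : Fin H → Fin 2 → Ω → ℝ)
    (hindep : iIndepFun
        (fun p : Fin H × Fin 2 => y p.1 p.2) μ)
    (hmom : ∀ g i, MemLp (y g i) 4 μ)
    (S2 : Fin H → ℝ)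
    (hS2 : ∀ g, ProbabilityTheory.variance (y g 0) μ = S2 g ∧
        ProbabilityTheory.variance (y g 1) μ = S2 g)
    (hmu3 : ∀ g, cmoment μ (y g 0) 3 = cmoment μ (y g 1) 3)
    (mu4 : Fin H → ℝ)
    (hmu4 : ∀ g, cmoment μ (y g 0) 4 = mu4 g ∧ cmoment μ (y g 1) 4 = mu4 g) :
    (∫ ω, ((1 / (2 * (H : ℝ) ^ 2)) * ∑ g, (y g 0 ω - y g 1 ω) ^ 2 / 2
        - (1 / (4 * (H : ℝ) ^ 2)) * ∑ g, 2 * S2 g) ^ 2 ∂μ)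
      = (1 / (8 * (H : ℝ) ^ 4)) *
          ∑ g, (mu4 g + (S2 g) ^ 2
            + 4 * S2 g * (rvMean μ (y g 0) - rvMean μ (y g 1)) ^ 2)
        + (1 / (16 * (H : ℝ) ^ 4)) *
            (∑ g, (rvMean μ (y g 0) - rvMean μ (y g 1)) ^ 2) ^ 2 := by
  classical
  set d : Fin H → ℝ := fun g => rvMean μ (y g 0) - rvMean μ (y g 1) with hd
  set W : Fin H → Ω → ℝ := fun g ω => (y g 0 ω - y g 1 ω)^2 - 2*S2 g with hW
  have hgroup : ∀ g, (∫ ω, W g ω ∂μ = (d g)^2) ∧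
      (∫ ω, (W g ω)^2 ∂μ = 2*mu4 g + 2*(S2 g)^2 + 8*S2 g*(d g)^2 + (d g)^4) := by
    intro g
    have hab : IndepFun (y g 0) (y g 1) μ :=
      hindep.indepFun (i := (g,0)) (j := (g,1)) (by simp [Prod.ext_iff])
    exact myGroupVals μ (hmom g 0) (hmom g 1) hab (S2 g) (mu4 g)
      (hS2 g).1 (hS2 g).2 (hmu3 g) (hmu4 g).1 (hmu4 g).2
  have hWL2 : ∀ g, MemLp (W g) 2 μ := by
    intro g
    have h1 : MemLp (fun ω => (y g 0 ω - y g 1 ω)^2) 2 μ :=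
      myMemLp_sq ((hmom g 0).sub (hmom g 1))
    exact h1.sub (memLp_const (2*S2 g))
  have hWint : ∀ g, Integrable (W g) μ := fun g => (hWL2 g).integrable one_le_two
  have hWWint : ∀ g g', Integrable (fun ω => W g ω * W g' ω) μ :=
    fun g g' => myIntegrableMulL2 (hWL2 g) (hWL2 g')
  have hYmeas : ∀ p : Fin H × Fin 2,
      Measurable ((hmom p.1 p.2).1.mk (y p.1 p.2)) :=
    fun p => ((hmom p.1 p.2).1.stronglyMeasurable_mk).measurable
  have hYae : ∀ p : Fin H × Fin 2, y p.1 p.2 =ᵐ[μ] (hmom p.1 p.2).1.mk (y p.1 p.2) :=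
    fun p => (hmom p.1 p.2).1.ae_eq_mk
  have hYindep : iIndepFun
      (fun p : Fin H × Fin 2 => (hmom p.1 p.2).1.mk (y p.1 p.2)) μ := myIIndep_ae_eq hindep hYae
  have hWindep : ∀ g g', g ≠ g' → IndepFun (W g) (W g') μ := by
    intro g g' hgg'
    have hp := hYindep.indepFun_prodMk_prodMk hYmeas (g,0) (g,1) (g',0) (g',1)
      (by simp [Prod.ext_iff, hgg']) (by simp [Prod.ext_iff, hgg'])
      (by simp [Prod.ext_iff, hgg']) (by simp [Prod.ext_iff, hgg'])
    have hφ : ∀ c : ℝ, Measurable (fun q : ℝ × ℝ => (q.1 - q.2)^2 - 2*c) := by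
      intro c; fun_prop
    have hcomp := hp.comp (hφ (S2 g)) (hφ (S2 g'))
    refine hcomp.congr ?_ ?_
    · filter_upwards [hYae (g,0), hYae (g,1)] with ω h0 h1
      simp only [Function.comp, hW]
      rw [← h0, ← h1]
    · filter_upwards [hYae (g',0), hYae (g',1)] with ω h0 h1
      simp only [Function.comp, hW]
      rw [← h0, ← h1]
  have hcross : ∀ g g', ∫ ω, W g ω * W g' ω ∂μ
      = (if g = g' then (∫ ω, (W g ω)^2 ∂μ) - (d g)^2*(d g)^2 else 0)
        + (d g)^2 * (d g')^2 := by
    intro g g'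
    by_cases h : g = g'
    · subst h
      rw [if_pos rfl]
      have e : ∫ ω, W g ω * W g ω ∂μ = ∫ ω, (W g ω)^2 ∂μ := by
        congr 1; funext ω; ring
      rw [e]; ring
    · rw [if_neg h]
      have e : ∫ ω, W g ω * W g' ω ∂μ = (∫ ω, W g ω ∂μ) * ∫ ω, W g' ω ∂μ :=
        (hWindep g g' h).integral_fun_mul_eq_mul_integral (hWint g).aestronglyMeasurable (hWint g').aestronglyMeasurable
      rw [e, (hgroup g).1, (hgroup g').1]; ring
  have hint_main : ∀ ω, (1/(2*(H:ℝ)^2)) * (∑ g, (y g 0 ω - y g 1 ω)^2/2)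
      - (1/(4*(H:ℝ)^2)) * (∑ g, 2*S2 g) = (1/(4*(H:ℝ)^2)) * ∑ g, W g ω := by
    intro ω
    simp only [hW, Finset.sum_sub_distrib, ← Finset.sum_div]
    ring
  have hsum : ∫ ω, (∑ g, W g ω)^2 ∂μ
      = ∑ g, ((∫ ω, (W g ω)^2 ∂μ) - (d g)^2*(d g)^2) + (∑ g, (d g)^2)^2 := by
    have e : (fun ω => (∑ g, W g ω)^2) = fun ω => ∑ g, ∑ g', W g ω * W g' ω := by
      funext ω; rw [sq, Finset.sum_mul_sum]
    rw [e, integral_finset_sum _ (fun g _ => integrable_finset_sum _ (fun g' _ => hWWint g g')),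
      Finset.sum_congr rfl (fun g _ => integral_finset_sum _ (fun g' _ => hWWint g g')),
      Finset.sum_congr rfl (fun g _ => Finset.sum_congr rfl (fun g' _ => hcross g g'))]
    simp only [Finset.sum_add_distrib]
    congr 1
    · refine Finset.sum_congr rfl fun g _ => ?_
      simp
    · rw [sq, Finset.sum_mul_sum]
  calc (∫ ω, ((1 / (2 * (H : ℝ) ^ 2)) * ∑ g, (y g 0 ω - y g 1 ω) ^ 2 / 2
        - (1 / (4 * (H : ℝ) ^ 2)) * ∑ g, 2 * S2 g) ^ 2 ∂μ)
      = ∫ ω, ((1/(4*(H:ℝ)^2)) * ∑ g, W g ω)^2 ∂μ := by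
        congr 1; funext ω; rw [← hint_main ω]
    _ = (1/(4*(H:ℝ)^2))^2 * ∫ ω, (∑ g, W g ω)^2 ∂μ := by
        simp_rw [mul_pow]; rw [integral_const_mul]
    _ = (1/(4*(H:ℝ)^2))^2 * (∑ g, 2*(mu4 g + (S2 g)^2 + 4*S2 g*(d g)^2) + (∑ g, (d g)^2)^2) := by
        rw [hsum]
        congr 2
        refine Finset.sum_congr rfl fun g _ => ?_
        rw [(hgroup g).2]; ring
    _ = (1 / (8 * (H : ℝ) ^ 4)) * ∑ g, (mu4 g + (S2 g) ^ 2 + 4 * S2 g * (d g) ^ 2)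
        + (1 / (16 * (H : ℝ) ^ 4)) * (∑ g, (d g) ^ 2) ^ 2 := by
        have hH0 : (H:ℝ) ≠ 0 := Nat.cast_ne_zero.2 (by omega)
        rw [← Finset.mul_sum]
        field_simp
        ring
end

section
/- Let H ≥ 1, b = (b_1,…,b_H) ∈ ℝ^H with mean b̄ = H⁻¹ Σ_g b_g, and suppose D = Σ_{g=1}^H (b_g − b̄)² > 0. Let C₂ > 0 and define σ*_g = b̄ + √(C₂/D) (b_g − b̄) for g = 1,…,H. Then: (i) H⁻¹ Σ_g σ*_g = b̄ and Σ_g (σ*_g − b̄)² = C₂; and (ii) for every σ = (σ_1,…,σ_H) ∈ ℝ^H satisfying H⁻¹ Σ_g σ_g = b̄ and Σ_g (σ_g − b̄)² = C₂, one has Σ_{g=1}^H (b_g − σ_g)² ≥ Σ_{g=1}^H (b_g − σ*_g)². -/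
/-!
Write `x = b - b̄` and `s = √(C₂/D)`, so that `σ* - b̄ = s x` and `Σ (s x_g)² = s² D = C₂`.
For any `σ` with `Σ (σ_g - b̄)² = C₂ = s² Σ x_g²`, Cauchy–Schwarz bounds
`Σ x_g (σ_g - b̄)` by `s Σ x_g²`, and expanding the squares gives
`Σ (b_g - σ_g)² ≥ (1 - s)² Σ x_g² = Σ (b_g - σ*_g)²`.
-/

open Finset

variable {ι : Type*} (s : Finset ι)

theorem sum_sub_div_card_eq_zero (f : ι → ℝ) :
    ∑ i ∈ s, (f i - (∑ j ∈ s, f j) / #s) = 0 := by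
  rcases s.eq_empty_or_nonempty with rfl | hs
  · simp
  · rw [sum_sub_distrib, sum_const, nsmul_eq_mul,
      mul_div_cancel₀ _ (Nat.cast_ne_zero.2 hs.card_pos.ne'), sub_self]

theorem sum_add_mul_sub_div_card (f : ι → ℝ) (c : ℝ) :
    ∑ i ∈ s, ((∑ j ∈ s, f j) / #s + c * (f i - (∑ j ∈ s, f j) / #s)) = ∑ i ∈ s, f i := by
  have h := sum_sub_div_card_eq_zero s f
  calc ∑ i ∈ s, ((∑ j ∈ s, f j) / #s + c * (f i - (∑ j ∈ s, f j) / #s))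
      = ∑ i ∈ s, f i + (c - 1) * ∑ i ∈ s, (f i - (∑ j ∈ s, f j) / #s) := by
        rw [mul_sum, ← sum_add_distrib]
        exact sum_congr rfl fun i _ => by ring
    _ = ∑ i ∈ s, f i := by rw [h, mul_zero, add_zero]

theorem sum_sub_mul_sq_le_sum_sub_sq (x y : ι → ℝ) {c : ℝ} (hc : 0 ≤ c)
    (hy : ∑ i ∈ s, y i ^ 2 = c ^ 2 * ∑ i ∈ s, x i ^ 2) :
    ∑ i ∈ s, (x i - c * x i) ^ 2 ≤ ∑ i ∈ s, (x i - y i) ^ 2 := by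
  have hX : 0 ≤ ∑ i ∈ s, x i ^ 2 := sum_nonneg fun i _ => sq_nonneg _
  have hinner : ∑ i ∈ s, x i * y i ≤ c * ∑ i ∈ s, x i ^ 2 := by
    refine (abs_le_of_sq_le_sq' ?_ (mul_nonneg hc hX)).2
    calc (∑ i ∈ s, x i * y i) ^ 2 ≤ (∑ i ∈ s, x i ^ 2) * ∑ i ∈ s, y i ^ 2 :=
          sum_mul_sq_le_sq_mul_sq s x y
      _ = (c * ∑ i ∈ s, x i ^ 2) ^ 2 := by rw [hy]; ring
  have hlhs : ∑ i ∈ s, (x i - c * x i) ^ 2 = (1 - c) ^ 2 * ∑ i ∈ s, x i ^ 2 := by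
    rw [mul_sum]; exact sum_congr rfl fun i _ => by ring
  have hrhs : ∑ i ∈ s, (x i - y i) ^ 2
      = ∑ i ∈ s, x i ^ 2 - 2 * ∑ i ∈ s, x i * y i + ∑ i ∈ s, y i ^ 2 := by
    rw [mul_sum, ← sum_sub_distrib, ← sum_add_distrib]
    exact sum_congr rfl fun i _ => by ring
  rw [hlhs, hrhs, hy]
  nlinarith

theorem stmt_14_general (H : ℕ) (b : Fin H → ℝ) (C₂ : ℝ) (hC₂ : 0 < C₂)
    (hD : 0 < ∑ g, (b g - (∑ g', b g') / H) ^ 2) :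
    (((∑ g, ((∑ g', b g') / H
          + Real.sqrt (C₂ / ∑ g', (b g' - (∑ g'', b g'') / H) ^ 2)
            * (b g - (∑ g', b g') / H))) / H
        = (∑ g', b g') / H)
      ∧ (∑ g, (((∑ g', b g') / H
            + Real.sqrt (C₂ / ∑ g', (b g' - (∑ g'', b g'') / H) ^ 2)
              * (b g - (∑ g', b g') / H)) - (∑ g', b g') / H) ^ 2
        = C₂))
    ∧ ∀ σ : Fin H → ℝ,
        (∑ g, σ g) / H = (∑ g', b g') / H →
        (∑ g, (σ g - (∑ g', b g') / H) ^ 2) = C₂ →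
        (∑ g, (b g - σ g) ^ 2)
          ≥ ∑ g, (b g - ((∑ g', b g') / H
              + Real.sqrt (C₂ / ∑ g', (b g' - (∑ g'', b g'') / H) ^ 2)
                * (b g - (∑ g', b g') / H))) ^ 2 := by
  set m : ℝ := (∑ g', b g') / H
  set D : ℝ := ∑ g', (b g' - m) ^ 2
  set s : ℝ := Real.sqrt (C₂ / D)
  have hsD : C₂ = s ^ 2 * D := by
    rw [Real.sq_sqrt (div_pos hC₂ hD).le, div_mul_cancel₀ _ hD.ne']
  refine ⟨⟨?_, ?_⟩, fun σ _ hσ => ?_⟩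
  · have := sum_add_mul_sub_div_card univ b s
    rw [card_univ, Fintype.card_fin] at this
    rw [this]
  · simp only [add_sub_cancel_left, mul_pow, ← mul_sum]
    exact hsD.symm
  · have key := sum_sub_mul_sq_le_sum_sub_sq univ (fun g => b g - m) (fun g => σ g - m)
      (Real.sqrt_nonneg _) (hσ.trans hsD)
    simp only [sub_sub_sub_cancel_right] at key
    convert key using 2 with g
    ring

/-- The constrained optimization behind the constrained Bayes estimator
(equations (4.4)-(4.5)): rescaling the deviations of `b` from its mean `b̄` by
`√(C₂/D)` yields the vector with mean `b̄` and ensemble sum of squared deviations `C₂`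
that is closest to `b` in squared distance among all such vectors. -/
theorem stmt_14 (H : ℕ) (hH : 1 ≤ H) (b : Fin H → ℝ) (C₂ : ℝ) (hC₂ : 0 < C₂)
    (hD : 0 < ∑ g, (b g - (∑ g', b g') / H) ^ 2) :
    (((∑ g, ((∑ g', b g') / H
          + Real.sqrt (C₂ / ∑ g', (b g' - (∑ g'', b g'') / H) ^ 2)
            * (b g - (∑ g', b g') / H))) / H
        = (∑ g', b g') / H)
      ∧ (∑ g, (((∑ g', b g') / H
            + Real.sqrt (C₂ / ∑ g', (b g' - (∑ g'', b g'') / H) ^ 2)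
              * (b g - (∑ g', b g') / H)) - (∑ g', b g') / H) ^ 2
        = C₂))
    ∧ ∀ σ : Fin H → ℝ,
        (∑ g, σ g) / H = (∑ g', b g') / H →
        (∑ g, (σ g - (∑ g', b g') / H) ^ 2) = C₂ →
        (∑ g, (b g - σ g) ^ 2)
          ≥ ∑ g, (b g - ((∑ g', b g') / H
              + Real.sqrt (C₂ / ∑ g', (b g' - (∑ g'', b g'') / H) ^ 2)
                * (b g - (∑ g', b g') / H))) ^ 2 :=
  stmt_14_general H b C₂ hC₂ hD
end

section
/- Let a > 3/2, H ≥ 2, and s_1,…,s_H ≥ 0 real numbers with mean s̄ = H⁻¹ Σ_g s_g, and assume Σ_{g=1}^H (s_g − s̄)² > 0. Define δ_g = (2a + s_g)/(2a − 1), δ̄ = H⁻¹ Σ_g δ_g, and V_g = 2 (2a + s_g)² / ((2a − 1)² (2a − 3)). Then for every g = 1,…,H: δ̄ + [ 1 + ( H⁻¹ Σ_{g'} V_{g'} ) / ( (H − 1)⁻¹ Σ_{g'} (δ_{g'} − δ̄)² ) ]^{1/2} (δ_g − δ̄) = (2a − 1)⁻¹ { 2a + s̄ + (s_g − s̄) [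 1 + 8 (H − 1) ( a² + a s̄ + (4H)⁻¹ Σ_{g'} s_{g'}² ) / ( (2a − 3) Σ_{g'} (s_{g'} − s̄)² ) ]^{1/2} }. -/
/-!
The Bayes estimators `δ_g = (2a + s_g)/(2a - 1)` are affine images of the data, so their mean and their
deviations from it are the mean of the `s_g` and the deviations `s_g - s̄`, shifted and scaled by
`2a - 1`. The factor `(2a - 1)²` then cancels between the average posterior variance and the
spread of the estimators, and expanding `(2a + s_g)²` leaves the numerator of (4.6).
-/

open BigOperators Finset

section AffineImage

variable {ι K : Type*} [Field K] [CharZero K] (t : Finset ι) (s : ι → K) (c d : K)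

theorem sum_add_div_div_card (ht : t.Nonempty) :
    (∑ i ∈ t, (c + s i) / d) / #t = (c + (∑ i ∈ t, s i) / #t) / d := by
  have hcard : (#t : K) ≠ 0 := by exact_mod_cast ht.card_pos.ne'
  rw [← sum_div, sum_add_distrib, sum_const, nsmul_eq_mul]
  field_simp

theorem add_div_sub_mean (ht : t.Nonempty) (x : K) :
    (c + x) / d - (∑ i ∈ t, (c + s i) / d) / #t = (x - (∑ i ∈ t, s i) / #t) / d := by
  rw [sum_add_div_div_card t s c d ht]
  ring

theorem sum_sq_add_div_sub_mean (ht : t.Nonempty) :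
    ∑ i ∈ t, ((c + s i) / d - (∑ j ∈ t, (c + s j) / d) / #t) ^ 2
      = (∑ i ∈ t, (s i - (∑ j ∈ t, s j) / #t) ^ 2) / d ^ 2 := by
  simp_rw [add_div_sub_mean t s c d ht, div_pow, ← sum_div]

theorem sum_two_mul_sq_two_mul_add_div_div_card (ht : t.Nonempty) (a k : K) :
    (∑ i ∈ t, 2 * (2 * a + s i) ^ 2 / k) / #t
      = 8 * (a ^ 2 + a * ((∑ i ∈ t, s i) / #t) + (∑ i ∈ t, s i ^ 2) / (4 * #t)) / k := by
  have hcard : (#t : K) ≠ 0 := by exact_mod_cast ht.card_pos.ne'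
  have hexpand : ∀ i, 2 * (2 * a + s i) ^ 2 = 8 * a ^ 2 + 8 * a * s i + 2 * s i ^ 2 :=
    fun i ↦ by ring
  simp_rw [← sum_div, hexpand, sum_add_distrib, sum_const, nsmul_eq_mul, ← mul_sum]
  field_simp
  ring

end AffineImage

theorem mul_div_sq_mul_div_div_sq_div {K : Type*} [Field K] {d : K} (hd : d ≠ 0) (c m e q h : K) :
    c * m / (d ^ 2 * e) / (q / d ^ 2 / h) = c * h * m / (e * q) := by
  field_simp

theorem stmt_15_general (a : ℝ) (ha : 3 / 2 < a) (H : ℕ) (s : Fin H → ℝ) :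
    ∀ g : Fin H,
      (∑ g', (2 * a + s g') / (2 * a - 1)) / H
        + Real.sqrt (1 +
            ((∑ g', 2 * (2 * a + s g') ^ 2 / ((2 * a - 1) ^ 2 * (2 * a - 3))) / H)
            / ((∑ g', ((2 * a + s g') / (2 * a - 1)
                  - (∑ g'', (2 * a + s g'') / (2 * a - 1)) / H) ^ 2) / ((H : ℝ) - 1)))
          * ((2 * a + s g) / (2 * a - 1) - (∑ g', (2 * a + s g') / (2 * a - 1)) / H)
      = (1 / (2 * a - 1)) *
          (2 * a + (∑ g', s g') / H
            + (s g - (∑ g', s g') / H)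
              * Real.sqrt (1 +
                  8 * ((H : ℝ) - 1) * (a ^ 2 + a * ((∑ g', s g') / H)
                      + (∑ g', (s g') ^ 2) / (4 * H))
                    / ((2 * a - 3) * ∑ g', (s g' - (∑ g'', s g'') / H) ^ 2))) := by
  intro g
  have hd : 2 * a - 1 ≠ 0 := by linarith
  have hne : (univ : Finset (Fin H)).Nonempty := ⟨g, mem_univ g⟩
  have hcard : (H : ℝ) = #(univ : Finset (Fin H)) := by rw [card_fin]
  rw [hcard, sum_two_mul_sq_two_mul_add_div_div_card _ _ hne, sum_sq_add_div_sub_mean _ _ _ _ hne,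
    mul_div_sq_mul_div_div_sq_div hd, add_div_sub_mean _ _ _ _ hne, sum_add_div_div_card _ _ _ _ hne]
  ring

/-- Algebraic identity showing that the constrained Bayes estimator of the paper's
equation (4.5), built from the Bayes estimators `δ_g = (2a + s_g)/(2a-1)` and posterior
variances `V_g = 2(2a+s_g)²/((2a-1)²(2a-3))`, equals the closed form of equation (4.6). -/
theorem stmt_15 (a : ℝ) (ha : 3 / 2 < a) (H : ℕ) (hH : 2 ≤ H)
    (s : Fin H → ℝ) (hs : ∀ g, 0 ≤ s g)
    (hpos : 0 < ∑ g, (s g - (∑ g', s g') / H) ^ 2) :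
    ∀ g : Fin H,
      (∑ g', (2 * a + s g') / (2 * a - 1)) / H
        + Real.sqrt (1 +
            ((∑ g', 2 * (2 * a + s g') ^ 2 / ((2 * a - 1) ^ 2 * (2 * a - 3))) / H)
            / ((∑ g', ((2 * a + s g') / (2 * a - 1)
                  - (∑ g'', (2 * a + s g'') / (2 * a - 1)) / H) ^ 2) / ((H : ℝ) - 1)))
          * ((2 * a + s g) / (2 * a - 1) - (∑ g', (2 * a + s g') / (2 * a - 1)) / H)
      = (1 / (2 * a - 1)) *
          (2 * a + (∑ g', s g') / H
            + (s g - (∑ g', s g') / H)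
              * Real.sqrt (1 +
                  8 * ((H : ℝ) - 1) * (a ^ 2 + a * ((∑ g', s g') / H)
                      + (∑ g', (s g') ^ 2) / (4 * H))
                    / ((2 * a - 3) * ∑ g', (s g' - (∑ g'', s g'') / H) ^ 2))) :=
  stmt_15_general a ha H s
end
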